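/- Let p be a prime and r ≥ 2 an integer with p ∤ r. There exists an integer e with 2 ≤ e ≤ p − 2 such that the solution S(p, e, r) is maximal if and only if p − 1 is not squarefree. -/

import Mathlib

/-- The smallest set `S(d,e,r)` of positive integers such that `r ∈ S`,
`n ∈ S` whenever `n^e ∈ S`, and `(n+d)^e ∈ S` whenever `n ∈ S`. -/
inductive GenS (d e r : ℕ) : ℕ → Prop
  | base : GenS d e r r
  | down (n : ℕ) : GenS d e r (n ^ e) → GenS d e r n
  | up (n : ℕ) : GenS d e r n → GenS d e r ((n + d) ^ e)

/-!
Along the rules generating `S(p,e,r)`, residues mod `p` only get raised to the `e`-th power,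
since `(n + p)^e ≡ n^e`. If a prime `q ∣ p - 1` does not divide `e`, then `x ↦ x^e` preserves the
`q`-th power residues, so `S` cannot contain both `p + 1` and a lift of a primitive root. When
`p - 1` is squarefree, every `2 ≤ e ≤ p - 2` has such a `q`. Conversely, if `q² ∣ p - 1`, then
`e = (p - 1)/q` satisfies `p - 1 ∣ e²`, so applying the up-rule twice to `r` yields some `s ≡ 1`,
and for every admissible `n` a huge power `n^(e^K) ≡ 1` is reached from `s` by adding multiples
of `p`, which gives `n` by the down-rule.
-/

lemma Squarefree.exists_prime_dvd_not_dvd {m e : ℕ} (hm : Squarefree m) (hme : ¬ m ∣ e) :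
    ∃ q, q.Prime ∧ q ∣ m ∧ ¬ q ∣ e := by
  by_contra! h
  refine hme (Nat.prod_primeFactors_of_squarefree hm ▸ Finset.prod_primes_dvd e ?_ ?_)
  · exact fun q hq ↦ (Nat.prime_of_mem_primeFactors hq).prime
  · exact fun q hq ↦ h q (Nat.prime_of_mem_primeFactors hq) (Nat.dvd_of_mem_primeFactors hq)

lemma Nat.dvd_div_sq_of_mul_self_dvd {m q : ℕ} (h : q * q ∣ m) : m ∣ (m / q) ^ 2 := by
  rcases Nat.eq_zero_or_pos q with rfl | hq
  · simp_all
  obtain ⟨c, rfl⟩ := h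
  rw [mul_assoc, Nat.mul_div_cancel_left _ hq]
  exact ⟨c, by ring⟩

namespace ZMod

lemma exists_natCast_eq {p : ℕ} [NeZero p] {x : ZMod p} (hx : x ≠ 0) :
    ∃ n, 2 ≤ n ∧ ¬ p ∣ n ∧ (n : ZMod p) = x := by
  have hval : x.val ≠ 0 := (val_ne_zero x).mpr hx
  have hcast : ((x.val + p : ℕ) : ZMod p) = x := by simp
  refine ⟨x.val + p, by have := NeZero.pos p; omega, ?_, hcast⟩
  rwa [← natCast_eq_zero_iff, hcast]

variable {p : ℕ} [Fact p.Prime]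

lemma pow_pow_div_eq_one_iff {q e : ℕ} (hq : q.Prime) (hqp : q ∣ p - 1) (hqe : ¬ q ∣ e)
    (x : ZMod p) : (x ^ e) ^ ((p - 1) / q) = 1 ↔ x ^ ((p - 1) / q) = 1 := by
  rcases eq_or_ne x 0 with rfl | hx
  · rw [zero_pow (by rintro rfl; exact hqe (dvd_zero q))]
  have hq_one : (x ^ ((p - 1) / q)) ^ q = 1 := by
    rw [← pow_mul, Nat.div_mul_cancel hqp, pow_card_sub_one_eq_one hx]
  have hcop : e.Coprime q := Nat.coprime_comm.mp ((Nat.Prime.coprime_iff_not_dvd hq).mpr hqe)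
  rw [← pow_mul, mul_comm, pow_mul, ← pow_eq_one_iff_of_coprime (a := x ^ ((p - 1) / q)) hcop, hq_one, eq_self, and_true]

lemma exists_unit_pow_div_ne_one {q : ℕ} (hq : 1 < q) (hqp : q ∣ p - 1) :
    ∃ u : (ZMod p)ˣ, u ^ ((p - 1) / q) ≠ 1 := by
  obtain ⟨g, hg⟩ := IsCyclic.exists_ofOrder_eq_natCard (α := (ZMod p)ˣ)
  rw [Nat.card_eq_fintype_card, card_units] at hg
  have hp : 0 < p - 1 := Nat.sub_pos_of_lt (Fact.out : p.Prime).one_lt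
  refine ⟨g, pow_ne_one_of_lt_orderOf ?_ (by rw [hg]; exact Nat.div_lt_self hp hq)⟩
  exact (Nat.div_pos (Nat.le_of_dvd hp hqp) (by omega)).ne'

end ZMod

namespace GenS

variable {d e r : ℕ}

lemma add_self {n : ℕ} (h : GenS d e r n) : GenS d e r (n + d) :=
  down _ (up _ h)

lemma add_mul_self {n : ℕ} (h : GenS d e r n) (t : ℕ) : GenS d e r (n + t * d) := by
  induction t with
  | zero => simpa using h
  | succ t ih => simpa [add_mul, ← add_assoc] using ih.add_self

lemma of_natCast_eq {a b : ℕ} (h : GenS d e r a) (hab : a ≤ b) (hcast : (a : ZMod d) = b) :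
    GenS d e r b := by
  obtain ⟨t, ht⟩ := (Nat.modEq_iff_dvd' hab).mp ((ZMod.natCast_eq_natCast_iff a b d).mp hcast)
  have hb : b = a + t * d := by rw [mul_comm, ← ht]; omega
  exact hb ▸ h.add_mul_self t

lemma of_pow_pow {n : ℕ} (k : ℕ) (h : GenS d e r (n ^ e ^ k)) : GenS d e r n := by
  induction k with
  | zero => simpa using h
  | succ k ih => exact ih (down _ (by rwa [← pow_mul, ← pow_succ]))

lemma iterate_up (k : ℕ) : GenS d e r ((fun n ↦ (n + d) ^ e)^[k] r) := by
  induction k with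
  | zero => exact base
  | succ k ih => rw [Function.iterate_succ_apply']; exact up _ ih

lemma natCast_iterate_up (k : ℕ) :
    (((fun n ↦ (n + d) ^ e)^[k] r : ℕ) : ZMod d) = (r : ZMod d) ^ e ^ k := by
  induction k with
  | zero => simp
  | succ k ih =>
    rw [Function.iterate_succ_apply', Nat.cast_pow, Nat.cast_add, ZMod.natCast_self, add_zero,
      ih, ← pow_mul, ← pow_succ]

lemma iff_of_forall_pow_iff (P : ZMod d → Prop) (hP : ∀ x, P (x ^ e) ↔ P x) {n : ℕ}
    (h : GenS d e r n) : P n ↔ P r := by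
  induction h with
  | base => rfl
  | down n _ ih => rwa [← hP, ← Nat.cast_pow]
  | up n _ ih =>
    rwa [Nat.cast_pow, Nat.cast_add, ZMod.natCast_self, add_zero, hP]

lemma two_le (he : e ≠ 0) (hr : 2 ≤ r) {n : ℕ} (h : GenS d e r n) : 2 ≤ n := by
  induction h with
  | base => exact hr
  | down n _ ih =>
    by_contra! hn
    have : n ^ e ≤ 1 := pow_le_one₀ n.zero_le (by omega)
    omega
  | up n _ ih => exact le_trans (by omega) (Nat.le_self_pow he _)

lemma not_dvd {p : ℕ} (hp : p.Prime) (he : e ≠ 0) (hpr : ¬ p ∣ r) {n : ℕ} (h : GenS p e r n) :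
    ¬ p ∣ n := by
  induction h with
  | base => exact hpr
  | down n _ ih => exact fun hn ↦ ih (dvd_pow hn he)
  | up n _ ih => exact fun hn ↦ ih ((Nat.dvd_add_left (dvd_refl p)).mp (hp.dvd_of_dvd_pow hn))

variable {p : ℕ} [Fact p.Prime]

theorem setOf_ne_of_prime_dvd_not_dvd {q : ℕ} (hq : q.Prime) (hqp : q ∣ p - 1)
    (hqe : ¬ q ∣ e) : {n | GenS p e r n} ≠ {n | 2 ≤ n ∧ ¬ p ∣ n} := by
  intro hS
  have hresidue : ∀ x : ZMod p, x ≠ 0 →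
      (x ^ ((p - 1) / q) = 1 ↔ (r : ZMod p) ^ ((p - 1) / q) = 1) := by
    intro x hx
    obtain ⟨n, hn, hpn, rfl⟩ := ZMod.exists_natCast_eq hx
    have hmem : n ∈ {n | GenS p e r n} := hS ▸ ⟨hn, hpn⟩
    exact hmem.iff_of_forall_pow_iff (· ^ ((p - 1) / q) = 1) (ZMod.pow_pow_div_eq_one_iff hq hqp hqe)
  obtain ⟨u, hu⟩ := ZMod.exists_unit_pow_div_ne_one hq.one_lt hqp
  have hr : (r : ZMod p) ^ ((p - 1) / q) = 1 := (hresidue 1 one_ne_zero).mp (one_pow _)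
  exact hu (Units.val_eq_one.mp (by push_cast; exact (hresidue u u.ne_zero).mpr hr))

theorem setOf_eq_of_dvd_pow (he : 2 ≤ e) (hr : 2 ≤ r) (hpr : ¬ p ∣ r) {k : ℕ}
    (hdvd : p - 1 ∣ e ^ k) : {n | GenS p e r n} = {n | 2 ≤ n ∧ ¬ p ∣ n} := by
  have hp : p.Prime := Fact.out
  have hone : ∀ x : ZMod p, x ≠ 0 → ∀ j ≥ k, x ^ e ^ j = 1 := by
    intro x hx j hj
    obtain ⟨c, hc⟩ := hdvd.trans (pow_dvd_pow e hj)
    rw [hc, pow_mul, ZMod.pow_card_sub_one_eq_one hx, one_pow]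
  have hne : ∀ {n : ℕ}, ¬ p ∣ n → (n : ZMod p) ≠ 0 := fun h ↦ by
    rwa [Ne, ZMod.natCast_eq_zero_iff]
  ext n
  refine ⟨fun h ↦ ⟨h.two_le (by omega) hr, h.not_dvd hp (by omega) hpr⟩, fun ⟨hn, hpn⟩ ↦ ?_⟩
  set s := (fun n ↦ (n + p) ^ e)^[k] r
  set K := s + k
  have hsK : s ≤ n ^ e ^ K :=
    calc s ≤ K := by omega
      _ ≤ e ^ K := (Nat.lt_pow_self (by omega)).le
      _ ≤ n ^ e ^ K := (Nat.lt_pow_self (by omega)).le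
  refine of_pow_pow K ((iterate_up k).of_natCast_eq hsK ?_)
  rw [natCast_iterate_up, hone _ (hne hpr) k le_rfl, Nat.cast_pow, hone _ (hne hpn) K (by omega)]

end GenS

/-- For a prime `p` and `r ≥ 2` with `p ∤ r`: there exists `2 ≤ e ≤ p − 2`
such that `S(p,e,r)` is maximal if and only if `p − 1` is not squarefree. -/
theorem exists_maximal_iff_not_squarefree (p r : ℕ) (hp : p.Prime)
    (hr : 2 ≤ r) (hpr : ¬ (p ∣ r)) :
    (∃ e : ℕ, 2 ≤ e ∧ e ≤ p - 2 ∧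
        {n : ℕ | GenS p e r n} = {n : ℕ | 2 ≤ n ∧ ¬ (p ∣ n)}) ↔
      ¬ Squarefree (p - 1) := by
  have := Fact.mk hp
  constructor
  · rintro ⟨e, he, hep, hS⟩ hsf
    obtain ⟨q, hq, hqp, hqe⟩ := hsf.exists_prime_dvd_not_dvd (e := e)
      fun h ↦ by have := Nat.le_of_dvd (by omega) h; omega
    exact GenS.setOf_ne_of_prime_dvd_not_dvd hq hqp hqe hS
  · intro hsf
    obtain ⟨q, hq, hqq⟩ : ∃ q, q.Prime ∧ q * q ∣ p - 1 := by
      simpa [Nat.squarefree_iff_prime_squarefree] using hsf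
    have hp1 : 0 < p - 1 := Nat.sub_pos_of_lt hp.one_lt
    have hqe : q ≤ (p - 1) / q :=
      (Nat.le_div_iff_mul_le hq.pos).mpr (Nat.le_of_dvd hp1 hqq)
    have hep : (p - 1) / q < p - 1 := Nat.div_lt_self hp1 hq.one_lt
    refine ⟨(p - 1) / q, le_trans hq.two_le hqe, by omega, ?_⟩
    exact GenS.setOf_eq_of_dvd_pow (le_trans hq.two_le hqe) hr hpr
      (Nat.dvd_div_sq_of_mul_self_dvd hqq)
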